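/- For every integer d ≥ 1, the function e : [0,1] → ℝ is convex on [0,1], and for every ρ ∈ (0,1) it is differentiable at ρ with derivative e'(ρ) = ε_F(ρ). -/

import Mathlib

open MeasureTheory

/-- The tight-binding dispersion relation `ε(k) = -2 Σᵢ cos kᵢ`. -/
noncomputable def eps (d : ℕ) (k : Fin d → ℝ) : ℝ := -2 * ∑ i, Real.cos (k i)

/-- `R(E) = (2π)^{-d} λ({k ∈ [-π,π]^d : ε(k) < E})`. -/
noncomputable def Rfun (d : ℕ) (E : ℝ) : ℝ :=
  (volume {k : Fin d → ℝ | (∀ i, k i ∈ Set.Icc (-Real.pi) Real.pi) ∧ eps d k < E}).toReal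
    / (2 * Real.pi) ^ d

/-- `(2π)^{-d} ∫_{k ∈ [-π,π]^d, ε(k) < E} ε(k) dk`. -/
noncomputable def en (d : ℕ) (E : ℝ) : ℝ :=
  (∫ k in {k : Fin d → ℝ | (∀ i, k i ∈ Set.Icc (-Real.pi) Real.pi) ∧ eps d k < E},
    eps d k) / (2 * Real.pi) ^ d

/-!
For fixed `E`, the map `E' ↦ ∫_{[-π,π]^d ∩ {ε < E'}} (ε - E)` is minimised at `E' = E`, because
`{ε < E}` is exactly where the integrand is negative. Writing `ρ = R(E)` and `ρ' = R(E')`, this is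
the supporting-line inequality `e(ρ') ≥ e(ρ) + ε_F(ρ) (ρ' - ρ)`; it also holds at `ρ' ∈ {0, 1}`,
reached by `E' ≤ -2d` and `E' > 2d` (where `∫ ε = 0`). Supporting lines at interior points give
convexity, and squeezing the difference quotient between `ε_F(ρ)` and `ε_F(ρ')` gives
`e' = ε_F`, once `ε_F` is continuous. That holds because `R` is monotone and strictly increasing
across `(-2d, 2d)`: there `ε` takes every value, hence every band `E₁ < ε < E₂` around it has
positive measure.
-/

open Set Filter Topology

section SupportingLines

variable {f g : ℝ → ℝ}

theorem convexOn_Icc_of_supportingLines {a b : ℝ}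
    (h : ∀ x ∈ Ioo a b, ∀ y ∈ Icc a b, f x + g x * (y - x) ≤ f y) :
    ConvexOn ℝ (Icc a b) f := by
  refine convexOn_iff_slope_mono_adjacent.2 ⟨convex_Icc a b, fun x y z hx hz hxy hyz => ?_⟩
  have hy : y ∈ Ioo a b := ⟨hx.1.trans_lt hxy, hyz.trans_le hz.2⟩
  have hleft := h y hy x hx
  have hright := h y hy z hz
  calc (f y - f x) / (y - x) ≤ g y := by rw [div_le_iff₀ (sub_pos.2 hxy)]; linarith
    _ ≤ (f z - f y) / (z - y) := by rw [le_div_iff₀ (sub_pos.2 hyz)]; linarith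

theorem slope_mem_uIcc_of_supportingLines {x z : ℝ} (hxz : x ≠ z)
    (hx : f x + g x * (z - x) ≤ f z) (hz : f z + g z * (x - z) ≤ f x) :
    slope f x z ∈ uIcc (g x) (g z) := by
  rw [slope_def_field]
  rcases hxz.lt_or_gt with hlt | hgt
  · refine Icc_subset_uIcc ⟨?_, ?_⟩
    · rw [le_div_iff₀ (sub_pos.2 hlt)]; linarith
    · rw [div_le_iff₀ (sub_pos.2 hlt)]; linarith
  · refine Icc_subset_uIcc' ⟨?_, ?_⟩
    · rw [le_div_iff_of_neg (sub_neg.2 hgt)]; linarith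
    · rw [div_le_iff_of_neg (sub_neg.2 hgt)]; linarith

/-- Squeezed between the slopes `g x` and `g z` of the supporting lines at its ends, the secant
slope of `f` on `[x, z]` tends to `g x` by continuity of `g`. -/
theorem hasDerivAt_of_supportingLines {s : Set ℝ} {x : ℝ} (hs : s ∈ 𝓝 x)
    (h : ∀ y ∈ s, ∀ z ∈ s, f y + g y * (z - y) ≤ f z) (hg : ContinuousAt g x) :
    HasDerivAt f (g x) x := by
  rw [hasDerivAt_iff_tendsto_slope]
  have hg' : Tendsto g (𝓝[≠] x) (𝓝 (g x)) := hg.tendsto.mono_left nhdsWithin_le_nhds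
  have hslope : ∀ᶠ z in 𝓝[≠] x, slope f x z ∈ uIcc (g x) (g z) := by
    filter_upwards [self_mem_nhdsWithin, nhdsWithin_le_nhds hs] with z hzx hz
    exact slope_mem_uIcc_of_supportingLines (Ne.symm hzx) (h x (mem_of_mem_nhds hs) z hz)
      (h z hz x (mem_of_mem_nhds hs))
  refine tendsto_of_tendsto_of_tendsto_of_le_of_le' ?_ ?_ (hslope.mono fun _ hz => hz.1)
    (hslope.mono fun _ hz => hz.2)
  · simpa using (tendsto_const_nhds (x := g x)).inf_nhds hg'
  · simpa using (tendsto_const_nhds (x := g x)).sup_nhds hg'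

end SupportingLines

theorem continuousAt_rightInverse_of_monotone {R F : ℝ → ℝ} {ρ : ℝ} (hR : Monotone R)
    (hRF : ∀ᶠ x in 𝓝 ρ, R (F x) = x) (hlt : ∀ E < F ρ, R E < ρ) (hgt : ∀ E > F ρ, ρ < R E) :
    ContinuousAt F ρ := by
  refine tendsto_order.2 ⟨fun E hE => ?_, fun E hE => ?_⟩
  · filter_upwards [hRF, Ioi_mem_nhds (hlt E hE)] with x hx hxE
    by_contra! hFx
    exact (hx ▸ hR hFx).not_gt hxE
  · filter_upwards [hRF, Iio_mem_nhds (hgt E hE)] with x hx hxE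
    by_contra! hFx
    exact (hx ▸ hR hFx).not_gt hxE

section TightBinding

variable (d : ℕ)

def brillouinZone : Set (Fin d → ℝ) := univ.pi fun _ => Icc (-Real.pi) Real.pi

-- Spelled as in `Rfun` and `en`, so that `Rfun_eq` and `en_eq` hold by `rfl`.
def fermiSea (E : ℝ) : Set (Fin d → ℝ) :=
  {k | (∀ i, k i ∈ Icc (-Real.pi) Real.pi) ∧ eps d k < E}

@[fun_prop]
theorem continuous_eps : Continuous (eps d) := by
  unfold eps; fun_prop

variable {d}

theorem neg_two_mul_le_eps (k : Fin d → ℝ) : -(2 * (d : ℝ)) ≤ eps d k := by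
  have : ∑ i, Real.cos (k i) ≤ d := by
    simpa using Finset.sum_le_sum fun i (_ : i ∈ Finset.univ) => Real.cos_le_one (k i)
  unfold eps; linarith

theorem eps_le_two_mul (k : Fin d → ℝ) : eps d k ≤ 2 * d := by
  have : -(d : ℝ) ≤ ∑ i, Real.cos (k i) := by
    simpa using Finset.sum_le_sum fun i (_ : i ∈ Finset.univ) => Real.neg_one_le_cos (k i)
  unfold eps; linarith

/-- On the diagonal `k = (t, …, t)`, `ε = -2d cos t` takes every value of `(-2d, 2d)` at some
`t = arccos (-c / 2d) ∈ (0, π)`. -/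
theorem exists_eps_eq {c : ℝ} (hc : c ∈ Ioo (-(2 * (d : ℝ))) (2 * d)) :
    ∃ k ∈ univ.pi fun _ : Fin d => Ioo (-Real.pi) Real.pi, eps d k = c := by
  have hd : (0 : ℝ) < 2 * d := by linarith [hc.1, hc.2]
  have hd₀ : (d : ℝ) ≠ 0 := by linarith
  have hx₁ : -1 < -c / (2 * d) := by rw [lt_div_iff₀ hd]; linarith [hc.2]
  have hx₂ : -c / (2 * d) < 1 := by rw [div_lt_one hd]; linarith [hc.1]
  refine ⟨fun _ => Real.arccos (-c / (2 * d)), fun _ _ => ⟨?_, Real.arccos_lt_pi.2 hx₁⟩, ?_⟩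
  · linarith [Real.arccos_pos.2 hx₂, Real.pi_pos]
  · simp only [eps, Real.cos_arccos hx₁.le hx₂.le, Finset.sum_const, Finset.card_univ,
      Fintype.card_fin, nsmul_eq_mul]
    field_simp

variable (d)

theorem isCompact_brillouinZone : IsCompact (brillouinZone d) :=
  isCompact_univ_pi fun _ => isCompact_Icc

theorem measurableSet_brillouinZone : MeasurableSet (brillouinZone d) :=
  MeasurableSet.univ_pi fun _ => measurableSet_Icc

theorem volume_brillouinZone : volume (brillouinZone d) = ENNReal.ofReal ((2 * Real.pi) ^ d) := by
  rw [brillouinZone, volume_pi_pi, Finset.prod_const, Finset.card_univ, Fintype.card_fin,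
    Real.volume_Icc, ← ENNReal.ofReal_pow (by linarith [Real.pi_pos])]
  ring_nf

theorem volume_real_brillouinZone : volume.real (brillouinZone d) = (2 * Real.pi) ^ d := by
  rw [measureReal_def, volume_brillouinZone, ENNReal.toReal_ofReal (by positivity)]

theorem integrableOn_brillouinZone {f : (Fin d → ℝ) → ℝ} (hf : Continuous f) :
    IntegrableOn f (brillouinZone d) :=
  hf.continuousOn.integrableOn_compact (isCompact_brillouinZone d)

/-- The uniform measure on `[-π,π]^d` is a product measure, and `cos` integrates to zero over
a period in each factor. -/
theorem setIntegral_brillouinZone_cos (i : Fin d) :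
    ∫ k in brillouinZone d, Real.cos (k i) = 0 := by
  classical
  rw [brillouinZone, volume_pi, Measure.restrict_pi_pi,
    ← integral_map (measurable_pi_apply i).aemeasurable (by fun_prop), Measure.pi_map_eval,
    integral_smul_measure, integral_Icc_eq_integral_Ioc,
    ← intervalIntegral.integral_of_le (by linarith [Real.pi_pos]), integral_cos]
  simp

theorem setIntegral_brillouinZone_eps : ∫ k in brillouinZone d, eps d k = 0 := by
  unfold eps
  rw [integral_const_mul, integral_finsetSum _ fun i _ =>
    integrableOn_brillouinZone d (by fun_prop)]
  simp [setIntegral_brillouinZone_cos]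

theorem fermiSea_eq_inter (E : ℝ) : fermiSea d E = brillouinZone d ∩ eps d ⁻¹' Iio E := by
  ext k
  simp only [fermiSea, brillouinZone, mem_ofPred_eq, mem_inter_iff, mem_univ_pi, mem_preimage,
    mem_Iio]

theorem measurableSet_fermiSea (E : ℝ) : MeasurableSet (fermiSea d E) := by
  rw [fermiSea_eq_inter]
  exact (measurableSet_brillouinZone d).inter ((continuous_eps d).measurable measurableSet_Iio)

variable {d}

theorem fermiSea_subset_brillouinZone (E : ℝ) : fermiSea d E ⊆ brillouinZone d := by
  rw [fermiSea_eq_inter]; exact inter_subset_left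

theorem fermiSea_mono : Monotone (fermiSea d) :=
  fun _ _ h _ hk => ⟨hk.1, hk.2.trans_le h⟩

theorem fermiSea_eq_empty {E : ℝ} (hE : E ≤ -(2 * (d : ℝ))) : fermiSea d E = ∅ :=
  eq_empty_of_forall_notMem fun k hk => (hk.2.trans_le hE).not_ge (neg_two_mul_le_eps k)

theorem fermiSea_eq_brillouinZone {E : ℝ} (hE : 2 * (d : ℝ) < E) :
    fermiSea d E = brillouinZone d := by
  rw [fermiSea_eq_inter, inter_eq_left]
  exact fun k _ => (eps_le_two_mul k).trans_lt hE

theorem volume_fermiSea_ne_top (E : ℝ) : volume (fermiSea d E) ≠ ⊤ :=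
  measure_ne_top_of_subset (fermiSea_subset_brillouinZone E)
    (volume_brillouinZone d ▸ ENNReal.ofReal_ne_top)

theorem Rfun_eq (E : ℝ) : Rfun d E = volume.real (fermiSea d E) / (2 * Real.pi) ^ d := rfl

theorem en_eq (E : ℝ) : en d E = (∫ k in fermiSea d E, eps d k) / (2 * Real.pi) ^ d := rfl

theorem Rfun_mono : Monotone (Rfun d) := fun _ _ h => by
  rw [Rfun_eq, Rfun_eq]
  gcongr
  · exact volume_fermiSea_ne_top _
  · exact fermiSea_mono h

theorem Rfun_eq_zero_of_le {E : ℝ} (hE : E ≤ -(2 * (d : ℝ))) : Rfun d E = 0 := by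
  simp [Rfun_eq, fermiSea_eq_empty hE]

theorem en_eq_zero_of_le {E : ℝ} (hE : E ≤ -(2 * (d : ℝ))) : en d E = 0 := by
  simp [en_eq, fermiSea_eq_empty hE]

theorem Rfun_eq_one_of_lt {E : ℝ} (hE : 2 * (d : ℝ) < E) : Rfun d E = 1 := by
  rw [Rfun_eq, fermiSea_eq_brillouinZone hE, volume_real_brillouinZone, div_self (by positivity)]

theorem en_eq_zero_of_lt {E : ℝ} (hE : 2 * (d : ℝ) < E) : en d E = 0 := by
  rw [en_eq, fermiSea_eq_brillouinZone hE, setIntegral_brillouinZone_eps, zero_div]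

/-- The open set of interior states with `E₁ < ε < E₂` lies in `fermiSea d E₂ \ fermiSea d E₁`
and is nonempty by `exists_eps_eq`. -/
theorem Rfun_lt_Rfun (hd : 0 < d) {E₁ E₂ : ℝ} (h : E₁ < E₂) (h₁ : E₁ < 2 * d)
    (h₂ : -(2 * (d : ℝ)) < E₂) : Rfun d E₁ < Rfun d E₂ := by
  have hd' : (0 : ℝ) < d := Nat.cast_pos.2 hd
  obtain ⟨k, hk, hkc⟩ := exists_eps_eq (d := d)
    (c := (max E₁ (-(2 * d)) + min E₂ (2 * d)) / 2) ⟨by grind, by grind⟩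
  set U := (univ.pi fun _ : Fin d => Ioo (-Real.pi) Real.pi) ∩ eps d ⁻¹' Ioo E₁ E₂
  have hU : IsOpen U := (isOpen_set_pi finite_univ fun _ _ => isOpen_Ioo).inter
    (isOpen_Ioo.preimage (continuous_eps d))
  have hkU : k ∈ U := ⟨hk, by rw [mem_preimage, hkc]; constructor <;> grind⟩
  have hUsub : U ⊆ fermiSea d E₂ \ fermiSea d E₁ := fun k' hk' =>
    ⟨⟨fun i => Ioo_subset_Icc_self (hk'.1 i trivial), hk'.2.2⟩, fun h' => h'.2.not_ge hk'.2.1.le⟩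
  have hpos : 0 < volume.real (fermiSea d E₂ \ fermiSea d E₁) :=
    ENNReal.toReal_pos ((hU.measure_pos volume ⟨k, hkU⟩).trans_le (measure_mono hUsub)).ne'
      (measure_ne_top_of_subset sdiff_subset (volume_fermiSea_ne_top E₂))
  rw [measureReal_sdiff (fermiSea_mono h.le) (measurableSet_fermiSea d E₁)
    (volume_fermiSea_ne_top E₂)] at hpos
  rw [Rfun_eq, Rfun_eq]
  gcongr
  linarith

/-- Among all Fermi seas, `fermiSea d E` minimises `∫ (ε - E)`, since it is exactly the set where
the integrand is negative. -/
theorem en_add_mul_sub_le (E E' : ℝ) : en d E + E * (Rfun d E' - Rfun d E) ≤ en d E' := by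
  have hmin : ∫ k in fermiSea d E, (eps d k - E) ≤ ∫ k in fermiSea d E', (eps d k - E) := by
    have hmeas (F : ℝ) : MeasurableSet (eps d ⁻¹' Iio F) :=
      (continuous_eps d).measurable measurableSet_Iio
    simp only [fermiSea_eq_inter, ← setIntegral_indicator (hmeas _)]
    refine setIntegral_mono
      ((integrableOn_brillouinZone d (by fun_prop)).indicator (hmeas E))
      ((integrableOn_brillouinZone d (by fun_prop)).indicator (hmeas E')) fun k => ?_
    by_cases hE : eps d k < E <;> by_cases hE' : eps d k < E' <;>
      simp [indicator, hE, hE'] <;> linarith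
  have hsub (F : ℝ) : ∫ k in fermiSea d F, (eps d k - E)
      = (∫ k in fermiSea d F, eps d k) - volume.real (fermiSea d F) * E := by
    rw [integral_sub ((integrableOn_brillouinZone d (continuous_eps d)).mono_set
      (fermiSea_subset_brillouinZone F)) (integrableOn_const (volume_fermiSea_ne_top F)),
      setIntegral_const, smul_eq_mul]
  rw [hsub, hsub] at hmin
  rw [en_eq, en_eq, Rfun_eq, Rfun_eq]
  have : (0 : ℝ) < (2 * Real.pi) ^ d := by positivity
  field_simp
  linarith

end TightBinding

/-- If `εF` is the Fermi energy (the unique `E ∈ (-2d,2d)` with `R(E) = ρ`) and `e`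
is the free-electron energy density (with `e(0) = e(1) = 0`), then `e` is convex
on `[0,1]` and differentiable on `(0,1)` with derivative `e'(ρ) = εF(ρ)`. -/
theorem stmt3 (d : ℕ) (hd : 1 ≤ d) (εF e : ℝ → ℝ)
    (hεF : ∀ ρ ∈ Set.Ioo (0:ℝ) 1,
      εF ρ ∈ Set.Ioo (-(2*(d:ℝ))) (2*(d:ℝ)) ∧ Rfun d (εF ρ) = ρ)
    (he : ∀ ρ ∈ Set.Ioo (0:ℝ) 1, e ρ = en d (εF ρ))
    (he0 : e 0 = 0) (he1 : e 1 = 0) :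
    ConvexOn ℝ (Set.Icc 0 1) e ∧ ∀ ρ ∈ Set.Ioo (0:ℝ) 1, HasDerivAt e (εF ρ) ρ := by
  have hlevel : ∀ z ∈ Icc (0 : ℝ) 1, ∃ E, Rfun d E = z ∧ en d E = e z := by
    rintro z ⟨hz₀, hz₁⟩
    rcases hz₀.eq_or_lt with rfl | hz₀
    · exact ⟨-(2 * d), Rfun_eq_zero_of_le le_rfl, by rw [he0, en_eq_zero_of_le le_rfl]⟩
    rcases hz₁.eq_or_lt with rfl | hz₁
    · exact ⟨2 * d + 1, Rfun_eq_one_of_lt (by linarith),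
        by rw [he1, en_eq_zero_of_lt (by linarith)]⟩
    exact ⟨εF z, (hεF z ⟨hz₀, hz₁⟩).2, (he z ⟨hz₀, hz₁⟩).symm⟩
  have hsupport : ∀ ρ ∈ Ioo (0 : ℝ) 1, ∀ z ∈ Icc (0 : ℝ) 1, e ρ + εF ρ * (z - ρ) ≤ e z := by
    intro ρ hρ z hz
    obtain ⟨E, rfl, hE⟩ := hlevel z hz
    have := en_add_mul_sub_le (d := d) (εF ρ) E
    rwa [(hεF ρ hρ).2, hE, ← he ρ hρ] at this
  refine ⟨convexOn_Icc_of_supportingLines hsupport, fun ρ hρ => ?_⟩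
  have hnhds : Ioo (0 : ℝ) 1 ∈ 𝓝 ρ := Ioo_mem_nhds hρ.1 hρ.2
  refine hasDerivAt_of_supportingLines hnhds
    (fun y hy z hz => hsupport y hy z (Ioo_subset_Icc_self hz)) ?_
  obtain ⟨⟨hlow, hhigh⟩, hρ'⟩ := hεF ρ hρ
  refine continuousAt_rightInverse_of_monotone Rfun_mono
    (Filter.mem_of_superset hnhds fun x hx => (hεF x hx).2) (fun E hE => ?_) (fun E hE => ?_)
  · exact hρ' ▸ Rfun_lt_Rfun hd hE (by linarith) hlow
  · exact hρ' ▸ Rfun_lt_Rfun hd hE hhigh (by linarith)
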